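/- arXiv:2012.09405 — 14 statements merged into one kernel-verified Lean document; each statement's English description precedes it below -/
import Mathlib

section
/- Let k be an algebraically closed field of characteristic 3 and let f = w^2 + z^3 + x*y^5 in k[x,y,z,w]. Then f^2 lies in the ideal (x^3, y^3, z^3, w^3). -/
open MvPolynomial

/-- Let `k` be an algebraically closed field of characteristic 3 and
`f = w² + z³ + x·y⁵ ∈ k[x,y,z,w]`.  Then `f²` lies in the ideal `(x³, y³, z³, w³)`.
Here the variables `x, y, z, w` are `X 0, X 1, X 2, X 3` in `MvPolynomial (Fin 4) k`. -/
theorem fedder_E8_char3 (k : Type*) [Field k] [IsAlgClosed k] [CharP k 3] :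
    ((X 3 ^ 2 + X 2 ^ 3 + X 0 * X 1 ^ 5 : MvPolynomial (Fin 4) k)) ^ 2 ∈
      Ideal.span {(X 0 : MvPolynomial (Fin 4) k) ^ 3, X 1 ^ 3, X 2 ^ 3, X 3 ^ 3} := by
  have h : ((X 3 ^ 2 + X 2 ^ 3 + X 0 * X 1 ^ 5 : MvPolynomial (Fin 4) k)) ^ 2 =
      X 3 * X 3 ^ 3 + (X 2 ^ 3 + 2 * X 3 ^ 2 + 2 * X 0 * X 1 ^ 5) * X 2 ^ 3 +
        (X 0 ^ 2 * X 1 ^ 7 + 2 * X 3 ^ 2 * X 0 * X 1 ^ 2) * X 1 ^ 3 := by ring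
  rw [h]
  refine Ideal.add_mem _ (Ideal.add_mem _ ?_ ?_) ?_
  · exact Ideal.mul_mem_left _ _ (Ideal.subset_span (by simp))
  · exact Ideal.mul_mem_left _ _ (Ideal.subset_span (by simp))
  · exact Ideal.mul_mem_left _ _ (Ideal.subset_span (by simp))
end

section
/- Let k be an algebraically closed field of characteristic 3 and let f = w^2 + z^3 - x^2*y^2*(x+y)^2 in k[x,y,z,w]. Then f^2 lies in the ideal (x^3, y^3, z^3, w^3). -/
open MvPolynomial

/-- Let `k` be an algebraically closed field of characteristic 3 and
`f = w² + z³ - x²·y²·(x+y)² ∈ k[x,y,z,w]`.  Then `f²` lies in `(x³, y³, z³, w³)`. -/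
theorem fedder_4A2_char3 (k : Type*) [Field k] [IsAlgClosed k] [CharP k 3] :
    ((X 3 ^ 2 + X 2 ^ 3 - X 0 ^ 2 * X 1 ^ 2 * (X 0 + X 1) ^ 2 : MvPolynomial (Fin 4) k)) ^ 2 ∈
      Ideal.span {(X 0 : MvPolynomial (Fin 4) k) ^ 3, X 1 ^ 3, X 2 ^ 3, X 3 ^ 3} := by
  set I : Ideal (MvPolynomial (Fin 4) k) :=
    Ideal.span {(X 0 : MvPolynomial (Fin 4) k) ^ 3, X 1 ^ 3, X 2 ^ 3, X 3 ^ 3} with hI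
  have hx : (X 0 : MvPolynomial (Fin 4) k) ^ 3 ∈ I := Ideal.subset_span (by simp)
  have hy : (X 1 : MvPolynomial (Fin 4) k) ^ 3 ∈ I := Ideal.subset_span (by simp)
  have hz : (X 2 : MvPolynomial (Fin 4) k) ^ 3 ∈ I := Ideal.subset_span (by simp)
  have hw : (X 3 : MvPolynomial (Fin 4) k) ^ 3 ∈ I := Ideal.subset_span (by simp)
  set q : MvPolynomial (Fin 4) k := X 2 ^ 3 - X 0 ^ 2 * X 1 ^ 2 * (X 0 + X 1) ^ 2 with hq
  have hqI : q ∈ I := by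
    have : q = X 2 ^ 3 - (X 0 ^ 3 * (X 0 * X 1 ^ 2 + 2 * X 1 ^ 3) + X 1 ^ 3 * (X 0 ^ 2 * X 1)) := by
      rw [hq]; ring
    rw [this]
    exact I.sub_mem hz (I.add_mem (I.mul_mem_right _ hx) (I.mul_mem_right _ hy))
  have key : ((X 3 ^ 2 + X 2 ^ 3 - X 0 ^ 2 * X 1 ^ 2 * (X 0 + X 1) ^ 2 : MvPolynomial (Fin 4) k)) ^ 2
      = X 3 ^ 3 * X 3 + (2 * X 3 ^ 2 + q) * q := by
    rw [hq]; ring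
  rw [key]
  exact I.add_mem (I.mul_mem_right _ hw) (I.mul_mem_left _ hqI)
end

section
/- Let k be an algebraically closed field of characteristic 3 and let f = w^2 + z^3 + x^2*y^2*z - x^4*z + x^6 in k[x,y,z,w]. Then f^2 does not lie in the ideal (x^3, y^3, z^3, w^3). -/
open MvPolynomial

noncomputable def m4aux : Fin 4 →₀ ℕ :=
  Finsupp.single 3 2 + Finsupp.single 0 2 + Finsupp.single 1 2 + Finsupp.single 2 1

lemma m4aux_apply_0 : m4aux 0 = 2 := by simp [m4aux, Finsupp.single_apply]
lemma m4aux_apply_1 : m4aux 1 = 2 := by simp [m4aux, Finsupp.single_apply]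
lemma m4aux_apply_2 : m4aux 2 = 1 := by simp [m4aux, Finsupp.single_apply]
lemma m4aux_apply_3 : m4aux 3 = 2 := by simp [m4aux, Finsupp.single_apply]

lemma coeff_m4aux_mul_cube {k : Type*} [Field k] (r : MvPolynomial (Fin 4) k) (i : Fin 4)
    (hi : m4aux i < 3) : coeff m4aux (r * X i ^ 3) = 0 := by
  rw [X_pow_eq_monomial, coeff_mul_monomial']
  rw [if_neg]
  intro hle
  have := (Finsupp.le_def.mp hle) i
  simp [Finsupp.single_apply] at this
  omega

set_option maxHeartbeats 2000000 in
lemma coeff_m4aux_sq {k : Type*} [Field k] :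
    coeff m4aux (((X 3 ^ 2 + X 2 ^ 3 + X 0 ^ 2 * X 1 ^ 2 * X 2 - X 0 ^ 4 * X 2 + X 0 ^ 6 :
        MvPolynomial (Fin 4) k)) ^ 2) = 2 := by
  have expand : ((X 3 ^ 2 + X 2 ^ 3 + X 0 ^ 2 * X 1 ^ 2 * X 2 - X 0 ^ 4 * X 2 + X 0 ^ 6 :
      MvPolynomial (Fin 4) k)) ^ 2 =
      X 3 ^ 4 + X 2 ^ 6 + X 0 ^4 * X 1 ^4 * X 2^2 + X 0^8*X 2^2 + X 0^12
      + (X 3^2 * X 2^3 + X 3^2 * X 2^3)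
      + (X 3^2 * X 0^2 * X 1^2 * X 2^1 + X 3^2 * X 0^2 * X 1^2 * X 2^1)
      - (X 3^2 * X 0^4 * X 2^1 + X 3^2 * X 0^4 * X 2^1)
      + (X 3^2 * X 0^6 + X 3^2 * X 0^6) + (X 2^4 * X 0^2 * X 1^2 + X 2^4 * X 0^2 * X 1^2)
      - (X 2^4 * X 0^4 + X 2^4 * X 0^4)
      + (X 2^3 * X 0^6 + X 2^3 * X 0^6) - (X 0^6*X 1^2*X 2^2 + X 0^6*X 1^2*X 2^2)
      + (X 0^8*X 1^2*X 2^1 + X 0^8*X 1^2*X 2^1)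
      - (X 0^10 * X 2^1 + X 0^10 * X 2^1) := by ring
  rw [expand]
  simp only [X_pow_eq_monomial, monomial_mul, coeff_add, coeff_sub, coeff_monomial, mul_one]
  have h1 : (Finsupp.single (3 : Fin 4) 4 : Fin 4 →₀ ℕ) ≠ m4aux := by
    intro h; have := DFunLike.congr_fun h 0; simp [m4aux, Finsupp.single_apply] at this
  have h2 : (Finsupp.single (2 : Fin 4) 6 : Fin 4 →₀ ℕ) ≠ m4aux := by
    intro h; have := DFunLike.congr_fun h 2; simp [m4aux, Finsupp.single_apply] at this
  have h3 : ((Finsupp.single (0 : Fin 4) 4 + Finsupp.single 1 4 + Finsupp.single 2 2 :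
      Fin 4 →₀ ℕ)) ≠ m4aux := by
    intro h; have := DFunLike.congr_fun h 0; simp [m4aux, Finsupp.single_apply] at this
  have h4 : ((Finsupp.single (0 : Fin 4) 8 + Finsupp.single 2 2 : Fin 4 →₀ ℕ)) ≠ m4aux := by
    intro h; have := DFunLike.congr_fun h 0; simp [m4aux, Finsupp.single_apply] at this
  have h5 : (Finsupp.single (0 : Fin 4) 12 : Fin 4 →₀ ℕ) ≠ m4aux := by
    intro h; have := DFunLike.congr_fun h 0; simp [m4aux, Finsupp.single_apply] at this
  have h6 : ((Finsupp.single (3 : Fin 4) 2 + Finsupp.single 2 3 : Fin 4 →₀ ℕ)) ≠ m4aux := by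
    intro h; have := DFunLike.congr_fun h 2; simp [m4aux, Finsupp.single_apply] at this
  have h7 : ((Finsupp.single (3 : Fin 4) 2 + Finsupp.single 0 2 + Finsupp.single 1 2 +
      Finsupp.single 2 1 : Fin 4 →₀ ℕ)) = m4aux := rfl
  have h8 : ((Finsupp.single (3 : Fin 4) 2 + Finsupp.single 0 4 + Finsupp.single 2 1 :
      Fin 4 →₀ ℕ)) ≠ m4aux := by
    intro h; have := DFunLike.congr_fun h 0; simp [m4aux, Finsupp.single_apply] at this
  have h9 : ((Finsupp.single (3 : Fin 4) 2 + Finsupp.single 0 6 : Fin 4 →₀ ℕ)) ≠ m4aux := by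
    intro h; have := DFunLike.congr_fun h 0; simp [m4aux, Finsupp.single_apply] at this
  have h10 : ((Finsupp.single (2 : Fin 4) 4 + Finsupp.single 0 2 + Finsupp.single 1 2 :
      Fin 4 →₀ ℕ)) ≠ m4aux := by
    intro h; have := DFunLike.congr_fun h 2; simp [m4aux, Finsupp.single_apply] at this
  have h11 : ((Finsupp.single (2 : Fin 4) 4 + Finsupp.single 0 4 : Fin 4 →₀ ℕ)) ≠ m4aux := by
    intro h; have := DFunLike.congr_fun h 0; simp [m4aux, Finsupp.single_apply] at this
  have h12 : ((Finsupp.single (2 : Fin 4) 3 + Finsupp.single 0 6 : Fin 4 →₀ ℕ)) ≠ m4aux := by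
    intro h; have := DFunLike.congr_fun h 0; simp [m4aux, Finsupp.single_apply] at this
  have h13 : ((Finsupp.single (0 : Fin 4) 6 + Finsupp.single 1 2 + Finsupp.single 2 2 :
      Fin 4 →₀ ℕ)) ≠ m4aux := by
    intro h; have := DFunLike.congr_fun h 0; simp [m4aux, Finsupp.single_apply] at this
  have h14 : ((Finsupp.single (0 : Fin 4) 8 + Finsupp.single 1 2 + Finsupp.single 2 1 :
      Fin 4 →₀ ℕ)) ≠ m4aux := by
    intro h; have := DFunLike.congr_fun h 0; simp [m4aux, Finsupp.single_apply] at this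
  have h15 : ((Finsupp.single (0 : Fin 4) 10 + Finsupp.single 2 1 : Fin 4 →₀ ℕ)) ≠ m4aux := by
    intro h; have := DFunLike.congr_fun h 0; simp [m4aux, Finsupp.single_apply] at this
  rw [if_neg h1, if_neg h2, if_neg h3, if_neg h4, if_neg h5, if_neg h6, if_pos h7, if_neg h8,
    if_neg h9, if_neg h10, if_neg h11, if_neg h12, if_neg h13, if_neg h14, if_neg h15]
  ring

/-- Let `k` be an algebraically closed field of characteristic 3 and
`f = w² + z³ + x²·y²·z - x⁴·z + x⁶ ∈ k[x,y,z,w]`.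
Then `f²` does not lie in the ideal `(x³, y³, z³, w³)`. -/
theorem fedder_Fsplit_char3 (k : Type*) [Field k] [IsAlgClosed k] [CharP k 3] :
    ((X 3 ^ 2 + X 2 ^ 3 + X 0 ^ 2 * X 1 ^ 2 * X 2 - X 0 ^ 4 * X 2 + X 0 ^ 6 :
        MvPolynomial (Fin 4) k)) ^ 2 ∉
      Ideal.span {(X 0 : MvPolynomial (Fin 4) k) ^ 3, X 1 ^ 3, X 2 ^ 3, X 3 ^ 3} := by
  intro h
  rw [show ({(X 0 : MvPolynomial (Fin 4) k) ^ 3, X 1 ^ 3, X 2 ^ 3, X 3 ^ 3} :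
      Set (MvPolynomial (Fin 4) k)) =
      insert (X 0 ^ 3) (insert (X 1 ^ 3) (insert (X 2 ^ 3) {X 3 ^ 3})) from rfl] at h
  obtain ⟨a, z1, hz1, hf⟩ := Ideal.mem_span_insert.mp h
  obtain ⟨b, z2, hz2, hz1'⟩ := Ideal.mem_span_insert.mp hz1
  obtain ⟨c, z3, hz3, hz2'⟩ := Ideal.mem_span_insert.mp hz2
  obtain ⟨d, hz3'⟩ := Ideal.mem_span_singleton.mp hz3
  have hcoeff := congrArg (coeff m4aux) hf
  rw [coeff_m4aux_sq, hz1', hz2', hz3'] at hcoeff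
  rw [coeff_add, coeff_add, coeff_add, coeff_m4aux_mul_cube a 0 (by rw [m4aux_apply_0]; omega),
    coeff_m4aux_mul_cube b 1 (by rw [m4aux_apply_1]; omega),
    coeff_m4aux_mul_cube c 2 (by rw [m4aux_apply_2]; omega),
    mul_comm ((X 3 : MvPolynomial (Fin 4) k) ^ 3) d,
    coeff_m4aux_mul_cube d 3 (by rw [m4aux_apply_3]; omega)] at hcoeff
  simp only [add_zero, zero_add] at hcoeff
  have h3 : (3 : k) = 0 := by exact_mod_cast CharP.cast_eq_zero k 3
  have : (2 : k) ≠ 0 := by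
    intro h2
    have : (1 : k) = 0 := by linear_combination h3 - h2
    exact one_ne_zero this
  exact this hcoeff
end

section
/- Let k be an algebraically closed field of characteristic 2, and let α ∈ k be nonzero. The elliptic curve obtained as the smooth plane cubic x^3 + y^2*z + α^{1/8}*(x+z)*(y+z)*z = 0 in P^2 has j-invariant equal to α, where α^{1/8} denotes the (unique) 8th root of α in k. -/
open MvPolynomial

/-! In characteristic 2 all signs disappear, so the cubic is already the homogeneous Weierstrass
equation with `a₁ = a₃ = a₄ = a₆ = β` and `a₂ = 0`; no change of coordinates is needed. For this
curve `b₈ = β²`, hence `Δ = a₁⁴ b₈ + a₃⁴ + a₁³ a₃³ = β⁴`, while `c₄ = a₁⁴ = β⁴`, so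
`j = c₄³ / Δ = β⁸ = α`. -/

namespace WeierstrassCurve

section CharTwo

variable {R : Type*} [CommRing R] [CharP R 2]

lemma Projective.polynomial_of_char_two (W : Projective R) :
    W.polynomial = X 1 ^ 2 * X 2 + C W.a₁ * X 0 * X 1 * X 2 + C W.a₃ * X 1 * X 2 ^ 2
      + (X 0 ^ 3 + C W.a₂ * X 0 ^ 2 * X 2 + C W.a₄ * X 0 * X 2 ^ 2 + C W.a₆ * X 2 ^ 3) := by
  have h2 : (2 : MvPolynomial (Fin 3) R) = 0 := CharP.cast_eq_zero _ 2
  rw [Projective.polynomial]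
  linear_combination
    -(X 0 ^ 3 + C W.a₂ * X 0 ^ 2 * X 2 + C W.a₄ * X 0 * X 2 ^ 2 + C W.a₆ * X 2 ^ 3) * h2

def ofCharTwoCubic (β : R) : WeierstrassCurve R :=
  { a₁ := β, a₂ := 0, a₃ := β, a₄ := β, a₆ := β }

lemma ofCharTwoCubic_Δ (β : R) : (ofCharTwoCubic β).Δ = β ^ 4 := by
  have h2 : (2 : R) = 0 := CharP.cast_eq_zero R 2
  rw [Δ_of_char_two, b₈_of_char_two]
  simp only [ofCharTwoCubic]
  linear_combination (β ^ 7 + β ^ 6) * h2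

lemma ofCharTwoCubic_c₄ (β : R) : (ofCharTwoCubic β).c₄ = β ^ 4 :=
  c₄_of_char_two _

end CharTwo

lemma j_eq_div {F : Type*} [Field F] (W : WeierstrassCurve F) [W.IsElliptic] :
    W.j = W.c₄ ^ 3 / W.Δ := by
  rw [j, div_eq_inv_mul, ← coe_Δ', Units.val_inv_eq_inv_val]

end WeierstrassCurve

lemma aeval_linear_one {R : Type*} [CommRing R] {n : ℕ} (p : MvPolynomial (Fin n) R) :
    aeval (fun i => ∑ j, C ((1 : Matrix (Fin n) (Fin n) R) i j) * X j) p = p := by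
  have hid : (fun i => ∑ j, C ((1 : Matrix (Fin n) (Fin n) R) i j) * X j) = X := by
    funext i
    simp [Matrix.one_apply]
  rw [hid, aeval_X_left_apply]

open WeierstrassCurve in
theorem j_invariant_cubic_char2_general (k : Type*) [Field k] [CharP k 2]
    (α : k) (hα : α ≠ 0) (β : k) (hβ : β ^ 8 = α) :
    ∃ (W : WeierstrassCurve k) (hW : W.IsElliptic) (M : Matrix (Fin 3) (Fin 3) k) (c : k),
      IsUnit M.det ∧ c ≠ 0 ∧ W.Δ ≠ 0 ∧ @WeierstrassCurve.j k _ W hW = α ∧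
      aeval (fun i => ∑ j, C (M i j) * X j)
          (X 0 ^ 3 + X 1 ^ 2 * X 2 + C β * (X 0 + X 2) * (X 1 + X 2) * X 2 :
            MvPolynomial (Fin 3) k) =
        C c * WeierstrassCurve.Projective.polynomial W.toProjective := by
  have hβ0 : β ≠ 0 := by
    rintro rfl
    exact hα (by rw [← hβ, zero_pow (by norm_num)])
  have hΔ : (ofCharTwoCubic β).Δ ≠ 0 := by
    rw [ofCharTwoCubic_Δ]
    exact pow_ne_zero _ hβ0
  have : (ofCharTwoCubic β).IsElliptic := ⟨hΔ.isUnit⟩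
  refine ⟨ofCharTwoCubic β, this, 1, 1, by simp, one_ne_zero, hΔ, ?_, ?_⟩
  · rw [j_eq_div, ofCharTwoCubic_c₄, ofCharTwoCubic_Δ, ← hβ]
    field_simp
  · rw [aeval_linear_one, C_1, one_mul, Projective.polynomial_of_char_two]
    simp only [toProjective, ofCharTwoCubic, C_0]
    ring

/-- Let `k` be algebraically closed of characteristic 2 and let `α ∈ k` be nonzero.
The smooth plane cubic `x³ + y²z + α^{1/8}(x+z)(y+z)z = 0` in `ℙ²` (coordinates
`x, y, z` are `X 0, X 1, X 2`; `β` denotes the unique 8th root of `α`) has j-invariant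
`α`: there are a Weierstrass curve `W` with nonvanishing discriminant and `j`-invariant
`α`, an invertible linear change of coordinates `M` of `ℙ²` and a nonzero scalar `c`
transforming the cubic into `c` times the homogeneous Weierstrass polynomial of `W`. -/
theorem j_invariant_cubic_char2 (k : Type*) [Field k] [IsAlgClosed k] [CharP k 2]
    (α : k) (hα : α ≠ 0) (β : k) (hβ : β ^ 8 = α) :
    ∃ (W : WeierstrassCurve k) (hW : W.IsElliptic) (M : Matrix (Fin 3) (Fin 3) k) (c : k),
      IsUnit M.det ∧ c ≠ 0 ∧ W.Δ ≠ 0 ∧ @WeierstrassCurve.j k _ W hW = α ∧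
      aeval (fun i => ∑ j, C (M i j) * X j)
          (X 0 ^ 3 + X 1 ^ 2 * X 2 + C β * (X 0 + X 2) * (X 1 + X 2) * X 2 :
            MvPolynomial (Fin 3) k) =
        C c * WeierstrassCurve.Projective.polynomial W.toProjective :=
  j_invariant_cubic_char2_general k α hα β hβ
end

section
/- Let k be an algebraically closed field of characteristic 3. Consider the linear system Λ = { a(x^3 + y^2 z) + b z^3 + c x z^2 : [a:b:c] ∈ P^2 } of plane cubics. A member of Λ corresponding to [a:b:c] with a ≠ 0 and c ≠ 0 is a smooth cubic curve; equivalently, the locus of singular members of Λ is {a c = 0}. -/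
open MvPolynomial

/-- Let `k` be algebraically closed of characteristic 3, and consider the linear system
`Λ = { a(x³ + y²z) + bz³ + cxz² : [a:b:c] ∈ ℙ² }` of plane cubics (coordinates
`x, y, z` are `X 0, X 1, X 2`).  A member with `a ≠ 0` and `c ≠ 0` is a smooth cubic;
equivalently, the locus of singular members is `{ac = 0}`.  Here a projective plane
curve `F = 0` is singular iff there is a nonzero point where `F` and all of its partial
derivatives vanish. -/
theorem singular_members_char3 (k : Type*) [Field k] [IsAlgClosed k] [CharP k 3]
    (a b c : k) (habc : ¬(a = 0 ∧ b = 0 ∧ c = 0)) :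
    (∃ p : Fin 3 → k, p ≠ 0 ∧
        eval p (C a * (X 0 ^ 3 + X 1 ^ 2 * X 2) + C b * X 2 ^ 3 + C c * X 0 * X 2 ^ 2) = 0 ∧
        ∀ i, eval p (pderiv i
          (C a * (X 0 ^ 3 + X 1 ^ 2 * X 2) + C b * X 2 ^ 3 + C c * X 0 * X 2 ^ 2)) = 0) ↔
      a * c = 0 := by
  have h3 : (3 : k) = 0 := CharP.cast_eq_zero k 3
  have h2ne : (2 : k) ≠ 0 := by
    intro h
    have : (1 : k) = 0 := by linear_combination h3 - h
    exact one_ne_zero this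
  constructor
  · rintro ⟨p, hp, hF, h⟩
    have h0 := h 0
    have h1 := h 1
    have h2 := h 2
    simp [pderiv_mul, pderiv_pow, Pi.single_apply] at h0 h1 h2 hF
    by_contra hac
    have ha : a ≠ 0 := fun h => hac (by rw [h]; ring)
    have hc : c ≠ 0 := fun h => hac (by rw [h]; ring)
    rw [h3] at h0 h2
    -- from h0 : a * (0 * p 0 ^ 2) + p 2 ^ 2 * c = 0, deduce p 2 = 0
    have hp2 : p 2 = 0 := by
      have : p 2 ^ 2 * c = 0 := by linear_combination h0
      have := (mul_eq_zero.mp this).resolve_right hc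
      exact pow_eq_zero_iff (by norm_num) |>.mp this
    -- from h2 : a * p 1 ^ 2 + ... = 0, deduce p 1 = 0
    have hp1 : p 1 = 0 := by
      have : a * p 1 ^ 2 = 0 := by rw [hp2] at h2; linear_combination h2
      have := (mul_eq_zero.mp this).resolve_left ha
      exact pow_eq_zero_iff (by norm_num) |>.mp this
    have hp0 : p 0 = 0 := by
      have : a * p 0 ^ 3 = 0 := by rw [hp1, hp2] at hF; linear_combination hF
      have := (mul_eq_zero.mp this).resolve_left ha
      exact pow_eq_zero_iff (by norm_num) |>.mp this
    exact hp (funext fun i => by fin_cases i <;> assumption)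
  · intro hac
    by_cases ha : a = 0
    · refine ⟨![1, 0, 0], ?_, ?_, ?_⟩
      · intro h
        have := congrFun h 0
        simp at this
      · simp [ha]
      · intro i
        fin_cases i <;>
          simp [pderiv_mul, pderiv_pow, Pi.single_apply, ha, h3]
    · have hc : c = 0 := (mul_eq_zero.mp hac).resolve_left ha
      obtain ⟨t, ht⟩ := IsAlgClosed.exists_pow_nat_eq (b / a) (n := 3) (by norm_num)
      have htt : a * t ^ 3 = b := by rw [ht]; field_simp
      refine ⟨![-t, 0, 1], ?_, ?_, ?_⟩
      · intro h
        have := congrFun h 2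
        simp at this
      · simp only [eval_add, eval_mul, eval_pow, eval_C, eval_X]
        show a * ((![-t, 0, 1] 0) ^ 3 + (![-t, 0, 1] 1) ^ 2 * ![-t, 0, 1] 2) +
            b * (![-t, 0, 1] 2) ^ 3 + c * ![-t, 0, 1] 0 * (![-t, 0, 1] 2) ^ 2 = 0
        simp [hc]
        linear_combination -htt
      · intro i
        fin_cases i <;>
          simp [pderiv_mul, pderiv_pow, Pi.single_apply, hc, h3]
end

section
/- Let k be an algebraically closed field of characteristic 2. Consider the linear system Λ = { a(x^3 + y^2 z) + b z^3 + c x z^2 + d y z^2 : [a:b:c:d] ∈ P^3 } of plane cubics. The locus of singular members of Λ is exactly {a d = 0}; that is, the cubic a(x^3 + y^2 z) + b z^3 + c x z^2 + d y z^2 = 0 is smooth if and only if a ≠ 0 and d ≠ 0. -/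
open MvPolynomial

set_option maxHeartbeats 1000000 in
/-- Let `k` be algebraically closed of characteristic 2, and consider the linear system
`Λ = { a(x³ + y²z) + bz³ + cxz² + dyz² : [a:b:c:d] ∈ ℙ³ }` of plane cubics (coordinates
`x, y, z` are `X 0, X 1, X 2`).  The locus of singular members of `Λ` is exactly
`{ad = 0}`: the cubic is smooth iff `a ≠ 0` and `d ≠ 0`.  Here a projective plane curve
`F = 0` is singular iff there is a nonzero point where `F` and all of its partial
derivatives vanish. -/
theorem singular_members_char2 (k : Type*) [Field k] [IsAlgClosed k] [CharP k 2]
    (a b c d : k) (habcd : ¬(a = 0 ∧ b = 0 ∧ c = 0 ∧ d = 0)) :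
    (∃ p : Fin 3 → k, p ≠ 0 ∧
        eval p (C a * (X 0 ^ 3 + X 1 ^ 2 * X 2) + C b * X 2 ^ 3 + C c * X 0 * X 2 ^ 2
          + C d * X 1 * X 2 ^ 2) = 0 ∧
        ∀ i, eval p (pderiv i
          (C a * (X 0 ^ 3 + X 1 ^ 2 * X 2) + C b * X 2 ^ 3 + C c * X 0 * X 2 ^ 2
            + C d * X 1 * X 2 ^ 2)) = 0) ↔
      a * d = 0 := by
  have two : (2 : k) = 0 := CharTwo.two_eq_zero
  have three : (3 : k) = 1 := by
    have : (3 : k) = 2 + 1 := by norm_num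
    rw [this, two, zero_add]
  constructor
  · rintro ⟨p, hp, hF, hD⟩
    by_contra had
    have ha : a ≠ 0 := left_ne_zero_of_mul had
    have hd : d ≠ 0 := right_ne_zero_of_mul had
    have h0 := hD 0; have h1 := hD 1; have h2 := hD 2
    simp [pderiv_X, Pi.single_apply] at h0 h1 h2
    simp only [two, three] at h0 h1 h2
    simp at h0 h1 h2
    have hz : p 2 = 0 := h1.resolve_right hd
    rw [hz] at h0 h2
    simp at h0 h2
    have hx : p 0 = 0 := h0.resolve_left ha
    have hy : p 1 = 0 := h2.resolve_left ha
    apply hp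
    funext i
    fin_cases i <;> assumption
  · intro had
    rcases mul_eq_zero.1 had with ha | hd
    · refine ⟨![1, 0, 0], ?_, ?_, ?_⟩
      · intro h
        have := congrFun h 0
        simp at this
      · simp [ha]
      · intro i
        fin_cases i <;>
          simp [pderiv_X, Pi.single_apply, ha]
    · by_cases ha : a = 0
      · refine ⟨![1, 0, 0], ?_, ?_, ?_⟩
        · intro h
          have := congrFun h 0
          simp at this
        · simp [ha]
        · intro i
          fin_cases i <;>
            simp [pderiv_X, Pi.single_apply, ha]
      · obtain ⟨x, hx⟩ := IsAlgClosed.exists_pow_nat_eq (c / a) two_pos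
        obtain ⟨y, hy⟩ := IsAlgClosed.exists_pow_nat_eq (b / a) two_pos
        have hx' : a * x ^ 2 = c := by rw [hx]; field_simp
        have hy' : a * y ^ 2 = b := by rw [hy]; field_simp
        refine ⟨![x, y, 1], ?_, ?_, ?_⟩
        · intro h
          have := congrFun h 2
          simp at this
        · simp [hd]
          linear_combination x * hx' + hy' + (c * x + b) * two
        · intro i
          fin_cases i
          · simp [pderiv_X, Pi.single_apply]
            linear_combination hx' + c * two + a * x ^ 2 * two
          · simp [pderiv_X, Pi.single_apply]
            linear_combination a * y * two + hd
          · simp [pderiv_X, Pi.single_apply]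
            linear_combination hy' + (b + b + c * x + d * y) * two
end

section
/- Let k be an algebraically closed field of characteristic 2. The plane cubic x^3 + y^2 z + x y z = 0 in P^2 is an irreducible nodal curve: it has a unique singular point, and that singularity is a node. -/
/-!
As a polynomial in `z` over `k[x, y]` the cubic is `(y² + xy) z + x³`, linear with coprime
coefficients, hence irreducible. In characteristic 2 its gradient is `(x² + yz, xz, y² + xy)`,
which vanishes only where `x = y = 0`. In the chart `z = 1` the equation becomes
`x³ + y (x + y)`, whose quadratic part is the product of two distinct lines.
-/

open MvPolynomial

noncomputable def nodalCubic (k : Type*) [CommRing k] : MvPolynomial (Fin 3) k :=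
  X 0 ^ 3 + X 1 ^ 2 * X 2 + X 0 * X 1 * X 2

section Irreducible

variable {k : Type*} [Field k]

lemma isRelPrime_X_zero_pow_X_one_mul :
    IsRelPrime (X 1 * (X 0 + X 1) : MvPolynomial (Fin 2) k) (X 0 ^ 3) := by
  refine IsRelPrime.pow_right (IsRelPrime.symm ?_)
  rw [(X_prime (R := k)).irreducible.isRelPrime_iff_not_dvd]
  intro h
  simpa using map_dvd (eval ![0, 1]) h

lemma finSuccEquiv_rename_finRotate_nodalCubic :
    finSuccEquiv k 2 (rename (finRotate 3) (nodalCubic k)) =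
      Polynomial.C (X 1 * (X 0 + X 1)) * Polynomial.X + Polynomial.C (X 0 ^ 3) := by
  have h1 : finSuccEquiv k 2 (X 1) = Polynomial.C (X 0) := finSuccEquiv_X_succ (j := 0)
  have h2 : finSuccEquiv k 2 (X 2) = Polynomial.C (X 1) := finSuccEquiv_X_succ (j := 1)
  simp only [nodalCubic, map_add, map_mul, map_pow, rename_X, finRotate_apply]
  simp [h1, h2, finSuccEquiv_X_zero]
  ring

-- `finRotate 3` renames `x, y, z` to `X 1, X 2, X 0`, so that `finSuccEquiv` adjoins `z` last.
theorem irreducible_nodalCubic : Irreducible (nodalCubic k) := by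
  let e := (renameEquiv k (finRotate 3)).trans (finSuccEquiv k 2)
  rw [← MulEquiv.irreducible_iff e.toMulEquiv]
  change Irreducible (finSuccEquiv k 2 (rename (finRotate 3) (nodalCubic k)))
  rw [finSuccEquiv_rename_finRotate_nodalCubic]
  have hb : (X 0 + X 1 : MvPolynomial (Fin 2) k) ≠ 0 := fun h => by
    simpa using congrArg (eval ![0, 1]) h
  exact Polynomial.irreducible_C_mul_X_add_C (mul_ne_zero (X_ne_zero _) hb)
    isRelPrime_X_zero_pow_X_one_mul

end Irreducible

section SingularLocus

variable {k : Type*} [CommRing k] (p : Fin 3 → k)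

lemma eval_pderiv_zero_nodalCubic [CharP k 2] :
    eval p (pderiv 0 (nodalCubic k)) = p 0 ^ 2 + p 1 * p 2 := by
  simp [nodalCubic, pderiv_X]
  linear_combination p 0 ^ 2 * CharTwo.two_eq_zero (R := k)

lemma eval_pderiv_one_nodalCubic [CharP k 2] :
    eval p (pderiv 1 (nodalCubic k)) = p 0 * p 2 := by
  simp [nodalCubic, pderiv_X]
  linear_combination p 1 * p 2 * CharTwo.two_eq_zero (R := k)

lemma eval_pderiv_two_nodalCubic : eval p (pderiv 2 (nodalCubic k)) = p 1 * (p 0 + p 1) := by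
  simp [nodalCubic, pderiv_X]
  ring

lemma isSingular_nodalCubic_iff [IsDomain k] [CharP k 2] :
    (eval p (nodalCubic k) = 0 ∧ ∀ i, eval p (pderiv i (nodalCubic k)) = 0) ↔
      p 0 = 0 ∧ p 1 = 0 := by
  constructor
  · rintro ⟨-, hd⟩
    have h0 := eval_pderiv_zero_nodalCubic p ▸ hd 0
    have h1 := eval_pderiv_one_nodalCubic p ▸ hd 1
    have h2 := eval_pderiv_two_nodalCubic p ▸ hd 2
    have hx : p 0 = 0 := by
      rcases mul_eq_zero.mp h1 with hx | hz
      · exact hx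
      · simpa [hz] using h0
    refine ⟨hx, ?_⟩
    simpa [hx] using h2
  · rintro ⟨hx, hy⟩
    refine ⟨by simp [nodalCubic, hx, hy], fun i => ?_⟩
    fin_cases i
    · simp [eval_pderiv_zero_nodalCubic, hx, hy]
    · simp [eval_pderiv_one_nodalCubic, hx]
    · simp [eval_pderiv_two_nodalCubic, hy]

end SingularLocus

lemma coords_eq_zero_iff_exists_smul {k : Type*} [Semiring k] {p : Fin 3 → k} (hp : p ≠ 0) :
    (p 0 = 0 ∧ p 1 = 0) ↔ ∃ t : k, t ≠ 0 ∧ p = t • ![0, 0, 1] := by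
  constructor
  · rintro ⟨hx, hy⟩
    have hp' : p = p 2 • ![0, 0, 1] := by
      ext i; fin_cases i <;> simp [hx, hy]
    exact ⟨p 2, fun h => hp (by simpa [h] using hp'), hp'⟩
  · rintro ⟨t, -, rfl⟩
    simp

namespace MvPolynomial

variable {R : Type*} [CommSemiring R]

def IsNodeAtOrigin (f : MvPolynomial (Fin 2) R) : Prop :=
  homogeneousComponent 0 f = 0 ∧ homogeneousComponent 1 f = 0 ∧
    ∃ L₁ L₂ : MvPolynomial (Fin 2) R, L₁.IsHomogeneous 1 ∧ L₂.IsHomogeneous 1 ∧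
      (¬ ∃ u : R, L₂ = C u * L₁) ∧ homogeneousComponent 2 f = L₁ * L₂

lemma homogeneousComponent_add_of_isHomogeneous {σ : Type*}
    {p q : MvPolynomial σ R} {m n : ℕ} (hp : p.IsHomogeneous m) (hq : q.IsHomogeneous n)
    (d : ℕ) :
    homogeneousComponent d (p + q) = (if d = m then p else 0) + (if d = n then q else 0) := by
  rw [map_add, homogeneousComponent_of_mem hp, homogeneousComponent_of_mem hq]

lemma isNodeAtOrigin_add_mul {g L₁ L₂ : MvPolynomial (Fin 2) R} {n : ℕ} (hn : 3 ≤ n)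
    (hg : g.IsHomogeneous n) (h₁ : L₁.IsHomogeneous 1) (h₂ : L₂.IsHomogeneous 1)
    (h₁₂ : ¬ ∃ u : R, L₂ = C u * L₁) : IsNodeAtOrigin (g + L₁ * L₂) := by
  have hc := homogeneousComponent_add_of_isHomogeneous hg (h₁.mul h₂)
  have h0 : 0 ≠ n := by omega
  have h1 : 1 ≠ n := by omega
  have h2 : 2 ≠ n := by omega
  exact ⟨by simp [hc, h0], by simp [hc, h1], L₁, L₂, h₁, h₂, h₁₂, by simp [hc, h2]⟩

end MvPolynomial

section Node

variable {k : Type*} [CommRing k]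

lemma aeval_nodalCubic_chart :
    (aeval ![X 0, X 1, 1] (nodalCubic k) : MvPolynomial (Fin 2) k) =
      X 0 ^ 3 + X 1 * (X 0 + X 1) := by
  simp [nodalCubic]
  ring

lemma isNodeAtOrigin_aeval_nodalCubic [Nontrivial k] :
    IsNodeAtOrigin (aeval ![X 0, X 1, 1] (nodalCubic k) : MvPolynomial (Fin 2) k) := by
  rw [aeval_nodalCubic_chart]
  refine isNodeAtOrigin_add_mul le_rfl ((isHomogeneous_X k 0).pow 3) (isHomogeneous_X k 1)
    ((isHomogeneous_X k 0).add (isHomogeneous_X k 1)) ?_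
  rintro ⟨u, hu⟩
  simpa using congrArg (eval ![1, 0]) hu

end Node

theorem nodal_cubic_char2_general (k : Type*) [Field k] [CharP k 2] :
    Irreducible (X 0 ^ 3 + X 1 ^ 2 * X 2 + X 0 * X 1 * X 2 : MvPolynomial (Fin 3) k) ∧
    (∀ p : Fin 3 → k, p ≠ 0 →
      ((eval p (X 0 ^ 3 + X 1 ^ 2 * X 2 + X 0 * X 1 * X 2 : MvPolynomial (Fin 3) k) = 0 ∧
          ∀ i, eval p (pderiv i
            (X 0 ^ 3 + X 1 ^ 2 * X 2 + X 0 * X 1 * X 2 : MvPolynomial (Fin 3) k)) = 0) ↔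
        ∃ t : k, t ≠ 0 ∧ p = t • ![0, 0, 1])) ∧
    (homogeneousComponent 0
        (aeval ![X 0, X 1, 1]
          (X 0 ^ 3 + X 1 ^ 2 * X 2 + X 0 * X 1 * X 2 : MvPolynomial (Fin 3) k) :
          MvPolynomial (Fin 2) k) = 0 ∧
      homogeneousComponent 1
        (aeval ![X 0, X 1, 1]
          (X 0 ^ 3 + X 1 ^ 2 * X 2 + X 0 * X 1 * X 2 : MvPolynomial (Fin 3) k) :
          MvPolynomial (Fin 2) k) = 0 ∧
      ∃ L₁ L₂ : MvPolynomial (Fin 2) k, L₁.IsHomogeneous 1 ∧ L₂.IsHomogeneous 1 ∧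
        (¬ ∃ u : k, L₂ = C u * L₁) ∧
        homogeneousComponent 2
          (aeval ![X 0, X 1, 1]
            (X 0 ^ 3 + X 1 ^ 2 * X 2 + X 0 * X 1 * X 2 : MvPolynomial (Fin 3) k) :
            MvPolynomial (Fin 2) k) = L₁ * L₂) := by
  exact ⟨irreducible_nodalCubic,
    fun p hp => (isSingular_nodalCubic_iff p).trans (coords_eq_zero_iff_exists_smul hp),
    isNodeAtOrigin_aeval_nodalCubic⟩

/-- Let `k` be an algebraically closed field of characteristic 2.  The plane cubic
`x³ + y²z + xyz = 0` in `ℙ²` (coordinates `x, y, z` are `X 0, X 1, X 2`) is an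
irreducible nodal curve: its equation is irreducible, its unique singular point
(a nonzero point where the equation and all of its partial derivatives vanish) is
`[0:0:1]`, and that singularity is a node: in the affine chart `z = 1` around the
point, the local equation has no terms of degree `< 2` and its tangent cone (the
degree-2 homogeneous part) is a product of two distinct (non-proportional)
linear forms. -/
theorem nodal_cubic_char2 (k : Type*) [Field k] [IsAlgClosed k] [CharP k 2] :
    Irreducible (X 0 ^ 3 + X 1 ^ 2 * X 2 + X 0 * X 1 * X 2 : MvPolynomial (Fin 3) k) ∧
    (∀ p : Fin 3 → k, p ≠ 0 →
      ((eval p (X 0 ^ 3 + X 1 ^ 2 * X 2 + X 0 * X 1 * X 2 : MvPolynomial (Fin 3) k) = 0 ∧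
          ∀ i, eval p (pderiv i
            (X 0 ^ 3 + X 1 ^ 2 * X 2 + X 0 * X 1 * X 2 : MvPolynomial (Fin 3) k)) = 0) ↔
        ∃ t : k, t ≠ 0 ∧ p = t • ![0, 0, 1])) ∧
    (homogeneousComponent 0
        (aeval ![X 0, X 1, 1]
          (X 0 ^ 3 + X 1 ^ 2 * X 2 + X 0 * X 1 * X 2 : MvPolynomial (Fin 3) k) :
          MvPolynomial (Fin 2) k) = 0 ∧
      homogeneousComponent 1
        (aeval ![X 0, X 1, 1]
          (X 0 ^ 3 + X 1 ^ 2 * X 2 + X 0 * X 1 * X 2 : MvPolynomial (Fin 3) k) :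
          MvPolynomial (Fin 2) k) = 0 ∧
      ∃ L₁ L₂ : MvPolynomial (Fin 2) k, L₁.IsHomogeneous 1 ∧ L₂.IsHomogeneous 1 ∧
        (¬ ∃ u : k, L₂ = C u * L₁) ∧
        homogeneousComponent 2
          (aeval ![X 0, X 1, 1]
            (X 0 ^ 3 + X 1 ^ 2 * X 2 + X 0 * X 1 * X 2 : MvPolynomial (Fin 3) k) :
            MvPolynomial (Fin 2) k) = L₁ * L₂) :=
  nodal_cubic_char2_general k
end

section
/- Let k be an algebraically closed field of characteristic 2. Then the affine surface Spec k[x,y,z,w]/(w^2 + x*y*z*(x+y+z)) is Frobenius split if and only if (w^2 + x*y*z*(x+y+z)) ∉ (x^2, y^2, z^2, w^2), and indeed w^2 + x*y*z*(x+y+z) ∈ (x^2, y^2, z^2, w^2), so the surface is not Frobenius split. -/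
open MvPolynomial

/-- A ring `R` of characteristic `p` is Frobenius split if the Frobenius `R → R, r ↦ rᵖ`
admits a splitting, i.e. an additive map `σ : R → R` with `σ 1 = 1` and
`σ (aᵖ · b) = a · σ b` (an `R`-module splitting of `R → F_* R`). -/
def IsFrobeniusSplitRing (p : ℕ) (R : Type*) [CommRing R] : Prop :=
  ∃ σ : R →+ R, σ 1 = 1 ∧ ∀ a b : R, σ (a ^ p * b) = a * σ b

section Aux

variable (k : Type*) [Field k]

private lemma fedder_mem :
    (X 3 ^ 2 + X 0 * X 1 * X 2 * (X 0 + X 1 + X 2) : MvPolynomial (Fin 4) k) ∈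
      Ideal.span {(X 0 : MvPolynomial (Fin 4) k) ^ 2, X 1 ^ 2, X 2 ^ 2, X 3 ^ 2} := by
  have h : (X 3 ^ 2 + X 0 * X 1 * X 2 * (X 0 + X 1 + X 2) : MvPolynomial (Fin 4) k)
      = (X 1 * X 2) * X 0 ^ 2 + (X 0 * X 2) * X 1 ^ 2 + (X 0 * X 1) * X 2 ^ 2 + 1 * X 3 ^ 2 := by
    ring
  rw [h]
  refine Ideal.add_mem _ (Ideal.add_mem _ (Ideal.add_mem _ ?_ ?_) ?_) ?_
  · exact Ideal.mul_mem_left _ _ (Ideal.subset_span (Set.mem_insert _ _))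
  · exact Ideal.mul_mem_left _ _ (Ideal.subset_span
      (Set.mem_insert_of_mem _ (Set.mem_insert _ _)))
  · exact Ideal.mul_mem_left _ _ (Ideal.subset_span
      (Set.mem_insert_of_mem _ (Set.mem_insert_of_mem _ (Set.mem_insert _ _))))
  · exact Ideal.mul_mem_left _ _ (Ideal.subset_span
      (Set.mem_insert_of_mem _ (Set.mem_insert_of_mem _
        (Set.mem_insert_of_mem _ rfl))))

private lemma fedder_not_split :
    ¬ IsFrobeniusSplitRing 2
        (MvPolynomial (Fin 4) k ⧸
          Ideal.span {(X 3 ^ 2 + X 0 * X 1 * X 2 * (X 0 + X 1 + X 2) : MvPolynomial (Fin 4) k)}) := by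
  set f : MvPolynomial (Fin 4) k := X 3 ^ 2 + X 0 * X 1 * X 2 * (X 0 + X 1 + X 2) with hf
  set I : Ideal (MvPolynomial (Fin 4) k) := Ideal.span {f} with hI
  rintro ⟨σ, hσ1, hσ2⟩
  set π := Ideal.Quotient.mk I with hπ
  have hπf : π f = 0 := Ideal.Quotient.eq_zero_iff_mem.mpr (Ideal.subset_span rfl)
  have hsplit : f = X 3 ^ 2 * 1 +
      (X 0 ^ 2 * (X 1 * X 2) + X 1 ^ 2 * (X 0 * X 2) + X 2 ^ 2 * (X 0 * X 1)) := by
    rw [hf]; ring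
  have hw : π (X 3 ^ 2 * 1) =
      -(π (X 0 ^ 2 * (X 1 * X 2)) + π (X 1 ^ 2 * (X 0 * X 2)) + π (X 2 ^ 2 * (X 0 * X 1))) := by
    have h0 : π (X 3 ^ 2 * 1) +
        (π (X 0 ^ 2 * (X 1 * X 2)) + π (X 1 ^ 2 * (X 0 * X 2)) + π (X 2 ^ 2 * (X 0 * X 1))) = 0 := by
      rw [← π.map_add, ← π.map_add, ← π.map_add, ← hsplit, hπf]
    linear_combination h0
  have h1 : σ (π (X 3 ^ 2 * 1)) = π (X 3) := by
    rw [π.map_mul, π.map_pow, π.map_one, hσ2, hσ1, mul_one]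
  have h2a : σ (π (X 0 ^ 2 * (X 1 * X 2))) = π (X 0) * σ (π (X 1 * X 2)) := by
    rw [π.map_mul, π.map_pow, hσ2]
  have h2b : σ (π (X 1 ^ 2 * (X 0 * X 2))) = π (X 1) * σ (π (X 0 * X 2)) := by
    rw [π.map_mul, π.map_pow, hσ2]
  have h2c : σ (π (X 2 ^ 2 * (X 0 * X 1))) = π (X 2) * σ (π (X 0 * X 1)) := by
    rw [π.map_mul, π.map_pow, hσ2]
  have hmemw : π (X 3) ∈ Ideal.span {π (X 0), π (X 1), π (X 2)} := by
    rw [← h1, hw, σ.map_neg, σ.map_add, σ.map_add, h2a, h2b, h2c]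
    refine neg_mem (add_mem (add_mem ?_ ?_) ?_)
    · exact Ideal.mul_mem_right _ _ (Ideal.subset_span (Set.mem_insert _ _))
    · exact Ideal.mul_mem_right _ _ (Ideal.subset_span
        (Set.mem_insert_of_mem _ (Set.mem_insert _ _)))
    · exact Ideal.mul_mem_right _ _ (Ideal.subset_span
        (Set.mem_insert_of_mem _ (Set.mem_insert_of_mem _ rfl)))
  have hmap : π (X 3) ∈ Ideal.map π (Ideal.span {X 0, X 1, X 2}) := by
    rw [Ideal.map_span, Set.image_insert_eq, Set.image_insert_eq, Set.image_singleton]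
    exact hmemw
  have h3 : (X 3 : MvPolynomial (Fin 4) k) ∈ Ideal.span {X 0, X 1, X 2} ⊔ I :=
    Ideal.mem_quotient_iff_mem_sup.mp hmap
  -- evaluate at x = y = z = 0, w = X
  set φ : MvPolynomial (Fin 4) k →ₐ[k] Polynomial k :=
    aeval (fun i : Fin 4 => if i = 3 then (Polynomial.X : Polynomial k) else 0) with hφ
  have hle : Ideal.span {(X 0 : MvPolynomial (Fin 4) k), X 1, X 2} ⊔ I ≤
      Ideal.comap φ (Ideal.span {(Polynomial.X : Polynomial k) ^ 2}) := by
    refine sup_le ?_ ?_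
    · rw [Ideal.span_le]
      intro p hp
      simp only [Set.mem_insert_iff, Set.mem_singleton_iff] at hp
      rcases hp with rfl | rfl | rfl <;>
        · rw [SetLike.mem_coe, Ideal.mem_comap]
          simp [hφ]
    · rw [hI, Ideal.span_le]
      intro p hp
      rw [Set.mem_singleton_iff] at hp
      subst hp
      rw [SetLike.mem_coe, Ideal.mem_comap]
      have : φ f = Polynomial.X ^ 2 := by
        simp [hφ, hf]
      rw [this]
      exact Ideal.subset_span rfl
  have h4 : (Polynomial.X : Polynomial k) ∈ Ideal.span {(Polynomial.X : Polynomial k) ^ 2} := by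
    have := hle h3
    rw [Ideal.mem_comap] at this
    simpa [hφ] using this
  have hdvd : (Polynomial.X : Polynomial k) ^ 2 ∣ Polynomial.X :=
    Ideal.mem_span_singleton.mp h4
  have hdeg := Polynomial.degree_le_of_dvd hdvd Polynomial.X_ne_zero
  simp [Polynomial.degree_X_pow, Polynomial.degree_X] at hdeg

end Aux

/-- Let `k` be an algebraically closed field of characteristic 2 and
`f = w² + x·y·z·(x+y+z) ∈ k[x,y,z,w]`.  Then the affine surface
`Spec k[x,y,z,w]/(f)` is Frobenius split if and only if `f ∉ (x², y², z², w²)`;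
and indeed `f ∈ (x², y², z², w²)`, so the surface is not Frobenius split. -/
theorem fedder_7A1_not_Fsplit (k : Type*) [Field k] [IsAlgClosed k] [CharP k 2] :
    (IsFrobeniusSplitRing 2
        (MvPolynomial (Fin 4) k ⧸
          Ideal.span {(X 3 ^ 2 + X 0 * X 1 * X 2 * (X 0 + X 1 + X 2) : MvPolynomial (Fin 4) k)}) ↔
      (X 3 ^ 2 + X 0 * X 1 * X 2 * (X 0 + X 1 + X 2) : MvPolynomial (Fin 4) k) ∉
        Ideal.span {(X 0 : MvPolynomial (Fin 4) k) ^ 2, X 1 ^ 2, X 2 ^ 2, X 3 ^ 2}) ∧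
    (X 3 ^ 2 + X 0 * X 1 * X 2 * (X 0 + X 1 + X 2) : MvPolynomial (Fin 4) k) ∈
      Ideal.span {(X 0 : MvPolynomial (Fin 4) k) ^ 2, X 1 ^ 2, X 2 ^ 2, X 3 ^ 2} ∧
    ¬ IsFrobeniusSplitRing 2
        (MvPolynomial (Fin 4) k ⧸
          Ideal.span {(X 3 ^ 2 + X 0 * X 1 * X 2 * (X 0 + X 1 + X 2) : MvPolynomial (Fin 4) k)}) := by
  exact ⟨iff_of_false (fedder_not_split k) (not_not_intro (fedder_mem k)),
    fedder_mem k, fedder_not_split k⟩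
end

section
/- Let k be an algebraically closed field of characteristic 2, and let s, t, u be variables. Define x = s*t*(s+t), y = t*u*(t+u), z = u*s*(u+s), and w = s*t*u*(s+t)*(t+u)*(u+s) in k[s,t,u]. Then the polynomial identity w^2 + x*y*z*(x+y+z) = 0 holds in k[s,t,u]. -/
open MvPolynomial

/-- Over an algebraically closed field `k` of characteristic 2, with
`x = s·t·(s+t)`, `y = t·u·(t+u)`, `z = u·s·(u+s)` and `w = s·t·u·(s+t)·(t+u)·(u+s)`
in `k[s,t,u]` (where `s, t, u` are `X 0, X 1, X 2`), the identity
`w² + x·y·z·(x+y+z) = 0` holds. -/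
theorem identity_7A1 (k : Type*) [Field k] [IsAlgClosed k] [CharP k 2] :
    (X 0 * X 1 * X 2 * (X 0 + X 1) * (X 1 + X 2) * (X 2 + X 0) : MvPolynomial (Fin 3) k) ^ 2 +
      (X 0 * X 1 * (X 0 + X 1)) * (X 1 * X 2 * (X 1 + X 2)) * (X 2 * X 0 * (X 2 + X 0)) *
        ((X 0 * X 1 * (X 0 + X 1)) + (X 1 * X 2 * (X 1 + X 2)) + (X 2 * X 0 * (X 2 + X 0))) = 0 := by
  have h2 : (2 : MvPolynomial (Fin 3) k) = 0 := by
    have := CharP.cast_eq_zero (MvPolynomial (Fin 3) k) 2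
    simpa using this
  linear_combination ((X 0 * X 1 * X 2 * (X 0 + X 1) * (X 1 + X 2) * (X 2 + X 0) :
      MvPolynomial (Fin 3) k) ^ 2 -
      (X 0)^3 * (X 1)^3 * (X 2)^3 * ((X 0 + X 1) * (X 1 + X 2) * (X 2 + X 0))) * h2
end

section
/- Let k be an algebraically closed field of characteristic 2. In the polynomial ring k[s,t,u], the seven polynomials x^2, y^2, z^2, x*y, y*z, z*x, w, where x = s*t*(s+t), y = t*u*(t+u), z = u*s*(u+s), and w = s*t*u*(s+t)*(t+u)*(u+s), are linearly independent over k. -/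
set_option maxHeartbeats 2000000


open MvPolynomial

/-- Over an algebraically closed field `k` of characteristic 2, with
`x = s·t·(s+t)`, `y = t·u·(t+u)`, `z = u·s·(u+s)` and `w = s·t·u·(s+t)·(t+u)·(u+s)`
in `k[s,t,u]` (where `s, t, u` are `X 0, X 1, X 2`), the seven polynomials
`x², y², z², x·y, y·z, z·x, w` are linearly independent over `k`. -/
theorem linearIndependent_7A1 (k : Type*) [Field k] [IsAlgClosed k] [CharP k 2] :
    LinearIndependent k
      (![(X 0 * X 1 * (X 0 + X 1)) ^ 2,
         (X 1 * X 2 * (X 1 + X 2)) ^ 2,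
         (X 2 * X 0 * (X 2 + X 0)) ^ 2,
         (X 0 * X 1 * (X 0 + X 1)) * (X 1 * X 2 * (X 1 + X 2)),
         (X 1 * X 2 * (X 1 + X 2)) * (X 2 * X 0 * (X 2 + X 0)),
         (X 2 * X 0 * (X 2 + X 0)) * (X 0 * X 1 * (X 0 + X 1)),
         X 0 * X 1 * X 2 * (X 0 + X 1) * (X 1 + X 2) * (X 2 + X 0)] :
        Fin 7 → MvPolynomial (Fin 3) k) := by
  have h2 : (2 : MvPolynomial (Fin 3) k) = 0 := by
    exact_mod_cast CharP.cast_eq_zero (MvPolynomial (Fin 3) k) 2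
  have hx2 : ((X 0 * X 1 * (X 0 + X 1)) ^ 2 : MvPolynomial (Fin 3) k)
      = X 0 ^ 4 * X 1 ^ 2 + X 0 ^ 2 * X 1 ^ 4 := by
    linear_combination (X 0 ^ 3 * X 1 ^ 3 : MvPolynomial (Fin 3) k) * h2
  have hy2 : ((X 1 * X 2 * (X 1 + X 2)) ^ 2 : MvPolynomial (Fin 3) k)
      = X 1 ^ 4 * X 2 ^ 2 + X 1 ^ 2 * X 2 ^ 4 := by
    linear_combination (X 1 ^ 3 * X 2 ^ 3 : MvPolynomial (Fin 3) k) * h2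
  have hz2 : ((X 2 * X 0 * (X 2 + X 0)) ^ 2 : MvPolynomial (Fin 3) k)
      = X 0 ^ 2 * X 2 ^ 4 + X 0 ^ 4 * X 2 ^ 2 := by
    linear_combination (X 0 ^ 3 * X 2 ^ 3 : MvPolynomial (Fin 3) k) * h2
  have hxy : ((X 0 * X 1 * (X 0 + X 1)) * (X 1 * X 2 * (X 1 + X 2)) : MvPolynomial (Fin 3) k)
      = X 0 ^ 2 * X 1 ^ 3 * X 2 ^ 1 + X 0 ^ 2 * X 1 ^ 2 * X 2 ^ 2
        + X 0 ^ 1 * X 1 ^ 4 * X 2 ^ 1 + X 0 ^ 1 * X 1 ^ 3 * X 2 ^ 2 := by ring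
  have hyz : ((X 1 * X 2 * (X 1 + X 2)) * (X 2 * X 0 * (X 2 + X 0)) : MvPolynomial (Fin 3) k)
      = X 0 ^ 1 * X 1 ^ 2 * X 2 ^ 3 + X 0 ^ 2 * X 1 ^ 2 * X 2 ^ 2
        + X 0 ^ 1 * X 1 ^ 1 * X 2 ^ 4 + X 0 ^ 2 * X 1 ^ 1 * X 2 ^ 3 := by ring
  have hzx : ((X 2 * X 0 * (X 2 + X 0)) * (X 0 * X 1 * (X 0 + X 1)) : MvPolynomial (Fin 3) k)
      = X 0 ^ 3 * X 1 ^ 1 * X 2 ^ 2 + X 0 ^ 2 * X 1 ^ 2 * X 2 ^ 2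
        + X 0 ^ 4 * X 1 ^ 1 * X 2 ^ 1 + X 0 ^ 3 * X 1 ^ 2 * X 2 ^ 1 := by ring
  have hw : (X 0 * X 1 * X 2 * (X 0 + X 1) * (X 1 + X 2) * (X 2 + X 0) : MvPolynomial (Fin 3) k)
      = X 0 ^ 3 * X 1 ^ 2 * X 2 ^ 1 + X 0 ^ 3 * X 1 ^ 1 * X 2 ^ 2
        + X 0 ^ 2 * X 1 ^ 3 * X 2 ^ 1 + X 0 ^ 1 * X 1 ^ 3 * X 2 ^ 2
        + X 0 ^ 2 * X 1 ^ 1 * X 2 ^ 3 + X 0 ^ 1 * X 1 ^ 2 * X 2 ^ 3 := by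
    linear_combination (X 0 ^ 2 * X 1 ^ 2 * X 2 ^ 2 : MvPolynomial (Fin 3) k) * h2
  rw [Fintype.linearIndependent_iff]
  intro g hg
  rw [Fin.sum_univ_seven] at hg
  have hg' : g 0 • ((X 0 * X 1 * (X 0 + X 1)) ^ 2 : MvPolynomial (Fin 3) k)
      + g 1 • ((X 1 * X 2 * (X 1 + X 2)) ^ 2)
      + g 2 • ((X 2 * X 0 * (X 2 + X 0)) ^ 2)
      + g 3 • ((X 0 * X 1 * (X 0 + X 1)) * (X 1 * X 2 * (X 1 + X 2)))
      + g 4 • ((X 1 * X 2 * (X 1 + X 2)) * (X 2 * X 0 * (X 2 + X 0)))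
      + g 5 • ((X 2 * X 0 * (X 2 + X 0)) * (X 0 * X 1 * (X 0 + X 1)))
      + g 6 • (X 0 * X 1 * X 2 * (X 0 + X 1) * (X 1 + X 2) * (X 2 + X 0)) = 0 := hg
  rw [hx2, hy2, hz2, hxy, hyz, hzx, hw] at hg'
  have e0 := congrArg (coeff (Finsupp.single 0 4 + Finsupp.single 1 2 : Fin 3 →₀ ℕ)) hg'
  have e1 := congrArg (coeff (Finsupp.single 1 4 + Finsupp.single 2 2 : Fin 3 →₀ ℕ)) hg'
  have e2 := congrArg (coeff (Finsupp.single 0 2 + Finsupp.single 2 4 : Fin 3 →₀ ℕ)) hg'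
  have e3 := congrArg (coeff (Finsupp.single 0 1 + Finsupp.single 1 4 + Finsupp.single 2 1 : Fin 3 →₀ ℕ)) hg'
  have e4 := congrArg (coeff (Finsupp.single 0 1 + Finsupp.single 1 1 + Finsupp.single 2 4 : Fin 3 →₀ ℕ)) hg'
  have e5 := congrArg (coeff (Finsupp.single 0 4 + Finsupp.single 1 1 + Finsupp.single 2 1 : Fin 3 →₀ ℕ)) hg'
  have e6 := congrArg (coeff (Finsupp.single 0 3 + Finsupp.single 1 2 + Finsupp.single 2 1 : Fin 3 →₀ ℕ)) hg'
  simp only [coeff_smul, smul_eq_mul, X_pow_eq_monomial, monomial_mul, coeff_add, coeff_monomial,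
    coeff_zero, DFunLike.ext_iff, Finsupp.add_apply, Finsupp.single_apply, Fin.forall_fin_succ,
    Fin.reduceEq, reduceIte, Fin.isValue, Fin.ext_iff, Fin.val_zero, Fin.val_one, Fin.val_two] at e0 e1 e2 e3 e4 e5 e6
  norm_num at e0 e1 e2 e3 e4 e5 e6
  have e6' : g 6 = 0 := by rw [e5, zero_add] at e6; exact e6
  intro i
  fin_cases i <;> assumption
end

section
/- Let k be an algebraically closed field of characteristic 2 and let f = w*z^2 + x^3 + y^2*z ∈ k[x,y,z,w]. Then f ∈ (x^2, y^2, z^2, w^2); consequently, by Fedder's criterion, the cubic surface {w z^2 + x^3 + y^2 z = 0} in P^3 (the del Pezzo surface of degree 3 with singularity type E_6^0) is not Frobenius split. -/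
open MvPolynomial

/-!
Fedder's argument for a hypersurface `f = 0` in `S = k[x₁, …, xₙ]`, `k` perfect of characteristic
`p`. The monomials `X^e` with `0 ≤ eᵢ < p` form a basis of `S` over `Sᵖ`, and the dual basis is
given by `h ↦ Φ(X^{p-1-e} h)`, where the trace `Φ` keeps the monomials all of whose exponents are
`≡ p - 1 (mod p)` and takes their `p`-th root. Hence every `p⁻¹`-linear map on `S/(f)` lifts to
`Φ(G · -)` for some `G`, and compatibility with `(f)` forces `Gf ∈ (fᵖ)`, i.e. `G ∈ (f^{p-1})`.
If `f^{p-1} ∈ (x₁ᵖ, …, xₙᵖ)` then `Φ(G) = Φ(f^{p-1} T)` lies in `(x₁, …, xₙ)`, so the splitting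
condition `Φ(G) ≡ 1 (mod f)` is impossible. For `p = 2` and `f = wz² + x³ + y²z` one has
`f = x²·x + y²·z + z²·w`.
-/

theorem Nat.sub_succ_add_mod_eq_sub_one_iff {p e : ℕ} (a : ℕ) (he : e < p) :
    (p - (e + 1) + a) % p = p - 1 ↔ e = a % p := by
  have hr := Nat.mod_lt a (by omega : 0 < p)
  rw [← Nat.add_mod_mod]
  rcases lt_or_ge (p - (e + 1) + a % p) p with h | h
  · rw [Nat.mod_eq_of_lt h]; omega
  · rw [Nat.mod_eq_sub_mod h, Nat.mod_eq_of_lt (by omega)]; omega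

namespace MvPolynomial

variable {σ k : Type*} [Field k] (p : ℕ) [ExpChar k p] [PerfectRing k p]

open Classical in
noncomputable def frobeniusTrace : MvPolynomial σ k →+ MvPolynomial σ k :=
  (Finsupp.liftAddHom fun a =>
    if ∀ i, a i % p = p - 1 then
      (monomial (a ⌊/⌋ p)).toAddMonoidHom.comp (frobeniusEquiv k p).symm.toAddMonoidHom
    else 0).comp AddMonoidAlgebra.coeffAddEquiv.toAddMonoidHom

open Classical in
theorem frobeniusTrace_monomial (a : σ →₀ ℕ) (c : k) :
    frobeniusTrace p (monomial a c) =
      if ∀ i, a i % p = p - 1 then monomial (a ⌊/⌋ p) ((frobeniusEquiv k p).symm c) else 0 := by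
  rw [frobeniusTrace, AddMonoidHom.comp_apply, AddEquiv.coe_toAddMonoidHom, ← single_eq_monomial,
    AddMonoidAlgebra.coeffAddEquiv_apply, AddMonoidAlgebra.coeff_single,
    Finsupp.liftAddHom_apply_single]
  split_ifs <;> rfl

theorem frobeniusTrace_pow_mul (h g : MvPolynomial σ k) :
    frobeniusTrace p (h ^ p * g) = h * frobeniusTrace p g := by
  classical
  have hp := expChar_pos k p
  induction h using MvPolynomial.induction_on' generalizing g with
  | monomial a c =>
    induction g using MvPolynomial.induction_on' with
    | monomial b d =>
      have hmod (i : σ) : (p • a + b) i % p = b i % p := by simp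
      have hdiv : (p • a + b) ⌊/⌋ p = a + b ⌊/⌋ p := by
        ext i; simp [Nat.floorDiv_eq_div, Nat.mul_add_div hp]
      rw [monomial_pow, monomial_mul, frobeniusTrace_monomial, frobeniusTrace_monomial]
      simp only [hmod, hdiv]
      split_ifs
      · rw [monomial_mul, map_mul, frobeniusEquiv_symm_pow]
      · rw [mul_zero]
    | add g₁ g₂ h₁ h₂ => rw [mul_add, map_add, h₁, h₂, map_add, mul_add]
  | add h₁ h₂ ih₁ ih₂ => rw [add_pow_expChar, add_mul, map_add, ih₁, ih₂, add_mul]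

theorem constantCoeff_frobeniusTrace_mul {g : MvPolynomial σ k}
    (hg : g ∈ Ideal.span (Set.range fun i => X i ^ p)) (t : MvPolynomial σ k) :
    constantCoeff (frobeniusTrace p (g * t)) = 0 := by
  induction hg using Submodule.span_induction generalizing t with
  | mem _ hx =>
    obtain ⟨i, rfl⟩ := hx
    simp [frobeniusTrace_pow_mul]
  | zero => simp
  | add x y _ _ hx hy => rw [add_mul, map_add, map_add, hx, hy, add_zero]
  | smul a x _ hx => rw [smul_eq_mul, mul_comm a, mul_assoc, hx]

section Finite

variable [Fintype σ]

noncomputable def finMonomial {n : ℕ} (e : σ → Fin n) : MvPolynomial σ k :=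
  monomial (Finsupp.equivFunOnFinite.symm fun i => (e i : ℕ)) 1

theorem sum_frobeniusTrace_pow_mul_finMonomial [DecidableEq σ] (h : MvPolynomial σ k) :
    ∑ e : σ → Fin p, frobeniusTrace p (finMonomial (Fin.rev ∘ e) * h) ^ p * finMonomial e = h := by
  have hp := expChar_pos k p
  induction h using MvPolynomial.induction_on' with
  | monomial a c =>
    let e₀ : σ → Fin p := fun i => ⟨a i % p, Nat.mod_lt _ hp⟩
    have hcond (e : σ → Fin p) :
        (∀ i, (Finsupp.equivFunOnFinite.symm (fun i => ((Fin.rev ∘ e) i : ℕ)) + a) i % p = p - 1)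
          ↔ e = e₀ := by
      simp only [Finsupp.add_apply, Finsupp.coe_equivFunOnFinite_symm, Function.comp_apply,
        Fin.val_rev]
      exact (forall_congr' fun i => (Nat.sub_succ_add_mod_eq_sub_one_iff (a i) (e i).isLt).trans
        (Fin.ext_iff (b := e₀ i)).symm).trans _root_.funext_iff.symm
    simp only [finMonomial, monomial_mul, one_mul, frobeniusTrace_monomial, hcond]
    rw [Finset.sum_eq_single e₀ (fun e _ he => by rw [if_neg he, zero_pow hp.ne', zero_mul])
      (fun h => absurd (Finset.mem_univ e₀) h), if_pos rfl, monomial_pow, monomial_mul,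
      frobeniusEquiv_symm_pow_p, mul_one]
    congr 2
    ext i
    have hdiv : (p - (a i % p + 1) + a i) / p = a i / p := by
      have : p - (a i % p + 1) + a i = (p - 1) + p * (a i / p) := by
        have := Nat.mod_add_div (a i) p
        have := Nat.mod_lt (a i) hp
        omega
      rw [this, Nat.add_mul_div_left _ _ hp, Nat.div_eq_of_lt (by omega), zero_add]
    simp [e₀, hdiv, Nat.div_add_mod]
  | add h₁ h₂ ih₁ ih₂ =>
    simp only [mul_add, map_add, add_pow_expChar, add_mul, Finset.sum_add_distrib, ih₁, ih₂]

theorem exists_frobeniusTrace_mul_lift {I : Ideal (MvPolynomial σ k)}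
    (φ : MvPolynomial σ k ⧸ I →+ MvPolynomial σ k ⧸ I) (hφ : ∀ a b, φ (a ^ p * b) = a * φ b) :
    ∃ G : MvPolynomial σ k, ∀ h, Ideal.Quotient.mk I (frobeniusTrace p (G * h)) =
      φ (Ideal.Quotient.mk I h) := by
  classical
  choose d hd using fun e : σ → Fin p =>
    Ideal.Quotient.mk_surjective (φ (Ideal.Quotient.mk I (finMonomial e)))
  refine ⟨∑ e, d e ^ p * finMonomial (Fin.rev ∘ e), fun h => ?_⟩
  conv_rhs => rw [← sum_frobeniusTrace_pow_mul_finMonomial p h]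
  simp only [Finset.sum_mul, mul_assoc, map_sum, frobeniusTrace_pow_mul, map_mul, map_pow, hφ, hd]
  exact Finset.sum_congr rfl fun e _ => mul_comm _ _

theorem pow_dvd_of_forall_dvd_frobeniusTrace_mul {f g : MvPolynomial σ k}
    (h : ∀ s, f ∣ frobeniusTrace p (s * g)) : f ^ p ∣ g := by
  classical
  rw [← sum_frobeniusTrace_pow_mul_finMonomial p g]
  exact Finset.dvd_sum fun e _ => (pow_dvd_pow_of_dvd (h _) p).mul_right _

theorem not_isFrobeniusSplitRing_quotient_of_pow_sub_one_mem {f : MvPolynomial σ k} (hf : f ≠ 0)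
    (hfp : f ^ (p - 1) ∈ Ideal.span (Set.range fun i => X i ^ p)) :
    ¬ IsFrobeniusSplitRing p (MvPolynomial σ k ⧸ Ideal.span {f}) := by
  rintro ⟨φ, hφ1, hφ⟩
  obtain ⟨G, hG⟩ := exists_frobeniusTrace_mul_lift p φ hφ
  have hGf : f ^ p ∣ G * f := pow_dvd_of_forall_dvd_frobeniusTrace_mul p fun s => by
    rw [← Ideal.mem_span_singleton, ← Ideal.Quotient.eq_zero_iff_mem,
      show s * (G * f) = G * (f * s) by ring, hG, Ideal.Quotient.eq_zero_iff_mem.2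
        (Ideal.mem_span_singleton.2 (dvd_mul_right f s)), map_zero]
  obtain ⟨t, rfl⟩ : f ^ (p - 1) ∣ G := by
    rwa [← pow_sub_one_mul (expChar_pos k p).ne', mul_dvd_mul_iff_right hf] at hGf
  obtain ⟨c, hc⟩ : f ∣ 1 - frobeniusTrace p (f ^ (p - 1) * t) := by
    rw [← Ideal.mem_span_singleton, ← Ideal.Quotient.eq_zero_iff_mem, map_sub, map_one,
      ← mul_one (f ^ (p - 1) * t), hG, map_one, hφ1, sub_self]
  have hf0 : constantCoeff f = 0 := by
    refine IsNilpotent.eq_zero ⟨p - 1, ?_⟩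
    rw [← map_pow, ← RingHom.mem_ker]
    refine Ideal.span_le.2 ?_ hfp
    rintro _ ⟨i, rfl⟩
    simp [(expChar_pos k p).ne']
  have := congrArg constantCoeff hc
  rw [map_sub, map_one, constantCoeff_frobeniusTrace_mul p hfp, map_mul, hf0] at this
  simp at this

end Finite

end MvPolynomial

/-- Let `k` be algebraically closed of characteristic 2 and
`f = w·z² + x³ + y²·z ∈ k[x,y,z,w]`.  Then `f ∈ (x², y², z², w²)`; consequently, by
Fedder's criterion, the cubic surface `{w·z² + x³ + y²·z = 0} ⊆ ℙ³` (the del Pezzo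
surface of degree 3 of type `E₆⁰`) is not Frobenius split. -/
theorem fedder_E6_0_char2 (k : Type*) [Field k] [IsAlgClosed k] [CharP k 2] :
    (X 3 * X 2 ^ 2 + X 0 ^ 3 + X 1 ^ 2 * X 2 : MvPolynomial (Fin 4) k) ∈
      Ideal.span {(X 0 : MvPolynomial (Fin 4) k) ^ 2, X 1 ^ 2, X 2 ^ 2, X 3 ^ 2} ∧
    ¬ IsFrobeniusSplitRing 2
        (MvPolynomial (Fin 4) k ⧸
          Ideal.span {(X 3 * X 2 ^ 2 + X 0 ^ 3 + X 1 ^ 2 * X 2 : MvPolynomial (Fin 4) k)}) := by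
  set f : MvPolynomial (Fin 4) k := X 3 * X 2 ^ 2 + X 0 ^ 3 + X 1 ^ 2 * X 2
  have hmem : f ∈ Ideal.span {(X 0 : MvPolynomial (Fin 4) k) ^ 2, X 1 ^ 2, X 2 ^ 2, X 3 ^ 2} := by
    rw [show f = X 0 ^ 2 * X 0 + X 1 ^ 2 * X 2 + X 2 ^ 2 * X 3 by ring]
    refine add_mem (add_mem ?_ ?_) ?_ <;> exact Ideal.mul_mem_right _ _ (Ideal.subset_span (by simp))
  have hf : f ≠ 0 := fun h => by simpa [f] using congrArg (eval ![1, 0, 0, 0]) h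
  refine ⟨hmem, not_isFrobeniusSplitRing_quotient_of_pow_sub_one_mem 2 hf ?_⟩
  rw [show 2 - 1 = 1 from rfl, pow_one]
  refine Ideal.span_mono ?_ hmem
  rintro _ (rfl | rfl | rfl | rfl) <;> exact ⟨_, rfl⟩
end

section
/- Let k be an algebraically closed field of characteristic 3. The subset of the pencil spanned by z^3 and x^3 + y^2*z + x^2*z in the space of plane cubics consisting of singular members is exactly {[1:0], [0:1]} together with no other points; more precisely, for [λ:μ] ∈ P^1 with λ ≠ 0 and μ ≠ 0, the cubic λ*z^3 + μ*(x^3 + y^2*z + x^2*z) = 0 in P^2 is smooth. -/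
open MvPolynomial

/-- Let `k` be algebraically closed of characteristic 3.  In the pencil spanned by `z³`
and `x³ + y²z + x²z` (coordinates `x, y, z` are `X 0, X 1, X 2`), the singular members
are exactly the two members `[1:0]` and `[0:1]`: for `[λ:μ] ∈ ℙ¹`, the cubic
`λz³ + μ(x³ + y²z + x²z) = 0` is singular iff `λ = 0` or `μ = 0`; in particular it is
smooth whenever `λ ≠ 0` and `μ ≠ 0`.  Here a projective plane curve `F = 0` is singular
iff there is a nonzero point where `F` and all of its partial derivatives vanish. -/
theorem singular_members_pencil_char3 (k : Type*) [Field k] [IsAlgClosed k] [CharP k 3]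
    (l m : k) (hlm : ¬(l = 0 ∧ m = 0)) :
    (∃ p : Fin 3 → k, p ≠ 0 ∧
        eval p (C l * X 2 ^ 3 + C m * (X 0 ^ 3 + X 1 ^ 2 * X 2 + X 0 ^ 2 * X 2)) = 0 ∧
        ∀ i, eval p (pderiv i
          (C l * X 2 ^ 3 + C m * (X 0 ^ 3 + X 1 ^ 2 * X 2 + X 0 ^ 2 * X 2))) = 0) ↔
      l = 0 ∨ m = 0 := by
  have h3 : (3 : k) = 0 := by exact_mod_cast CharP.cast_eq_zero k 3
  have h2ne : (2 : k) ≠ 0 := by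
    intro h
    have : (3 : ℕ) ∣ 2 := by
      have := (CharP.cast_eq_zero_iff k 3 2).mp (by exact_mod_cast h)
      exact this
    omega
  constructor
  · rintro ⟨p, hp, hF, hd⟩
    by_cases hm : m = 0
    · exact Or.inr hm
    · left
      have h0 := hd 0
      have h1 := hd 1
      have h2 := hd 2
      simp [pderiv_X, pderiv_C, Derivation.leibniz, Derivation.leibniz_pow, h3, hm,
        h2ne] at h0 h1 h2
      simp at hF
      -- h0 : p 2 = 0 ∨ p 0 = 0 (after simplification), h1 : p 2 = 0 ∨ p 1 = 0
      -- h2 : l * 0 + m * (p 1 ^ 2 + p 0 ^ 2) = 0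
      by_cases hz : p 2 = 0
      · exfalso
        have hsum : p 1 ^ 2 + p 0 ^ 2 = 0 := h2
        have hx : p 0 = 0 := by
          have : m * p 0 ^ 3 = 0 := by linear_combination hF - (l * p 2 ^ 2 + m * p 1 ^ 2 + m * p 0 ^ 2) * hz
          rcases mul_eq_zero.mp this with h | h
          · exact absurd h hm
          · exact pow_eq_zero_iff (n := 3) (by norm_num) |>.mp h
        have hy : p 1 = 0 := by
          have : p 1 ^ 2 = 0 := by linear_combination hsum - p 0 * hx
          exact pow_eq_zero_iff (n := 2) (by norm_num) |>.mp this
        apply hp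
        funext i
        fin_cases i <;> simp [hx, hy, hz]
      · have hx : p 0 = 0 := by
          rcases h0 with h | h
          · exact absurd h hz
          · exact h
        have hy : p 1 = 0 := by
          rcases h1 with h | h
          · exact absurd h hz
          · exact h
        have : l * p 2 ^ 3 = 0 := by
          linear_combination hF - m * (p 0 ^ 2 + p 0 * p 2) * hx - m * (p 1 * p 2) * hy
        rcases mul_eq_zero.mp this with h | h
        · exact h
        · exact absurd (pow_eq_zero_iff (n := 3) (by norm_num) |>.mp h) hz
  · rintro (hl | hm)
    · refine ⟨![0, 0, 1], ?_, ?_, ?_⟩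
      · intro h
        simpa using congrFun h 2
      · simp [hl]
      · intro i
        fin_cases i <;>
          simp [pderiv_X, pderiv_C, Derivation.leibniz, Derivation.leibniz_pow, hl, h3]
    · refine ⟨![1, 0, 0], ?_, ?_, ?_⟩
      · intro h
        simpa using congrFun h 0
      · simp [hm]
      · intro i
        fin_cases i <;>
          simp [pderiv_X, pderiv_C, Derivation.leibniz, Derivation.leibniz_pow, hm, h3]
end

section
/- Let k be an algebraically closed field of characteristic 2 and let f = w^2 + z^3 + x*y^5 + y*z*w ∈ k[x,y,z,w]. Then f ∉ (x^2, y^2, z^2, w^2), so by Fedder's criterion the degree-one Du Val del Pezzo surface {w^2 + z^3 + x y^5 + y z w = 0} in P(1,1,2,3) (of type E_8^4 in characteristic 2) is Frobenius split. -/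
/-!
Over a perfect field of characteristic `p`, `S = k[x₁, …, xₙ]` is free over `Sᵖ` on the
monomials `xᵘ` with all `uᵢ < p`. Taking the coordinate along one such monomial and then the
`p`-th root gives an additive map `φ : S → S` with `φ (aᵖ b) = a φ(b)`. For
`f = w² + z³ + x y⁵ + y z w` and the monomial `y z w` one finds `φ(f) = 1`. This shows at once
that `f ∉ (x², y², z², w²)`, since `φ` maps that ideal into `(x, y, z, w)`, and that
`ḡ ↦ φ(f g)` is a Frobenius splitting of `S ⧸ (f)`, since `φ` maps `(f²)` into `(f)`.
-/

open MvPolynomial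

section FrobeniusSemilinear

variable {S : Type*} [CommRing S] {p : ℕ} {φ : S →+ S}

theorem map_mem_span_of_mem_span_image_pow (hφ : ∀ a b, φ (a ^ p * b) = a * φ b)
    {s : Set S} {x : S} (hx : x ∈ Ideal.span ((· ^ p) '' s)) : φ x ∈ Ideal.span s := by
  -- `φ` is only `Sᵖ`-linear, so the induction has to carry an arbitrary coefficient `c`.
  suffices ∀ c, φ (c * x) ∈ Ideal.span s by simpa using this 1
  induction hx using Submodule.span_induction with
  | mem y hy =>
    obtain ⟨a, ha, rfl⟩ := hy
    intro c
    rw [mul_comm, hφ]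
    exact Ideal.mul_mem_right _ _ (Ideal.subset_span ha)
  | zero => simp
  | add y z _ _ hy hz => intro c; rw [mul_add, map_add]; exact add_mem (hy c) (hz c)
  | smul d y _ hy => intro c; rw [smul_eq_mul, ← mul_assoc]; exact hy (c * d)

theorem isFrobeniusSplitRing_quotient_span_singleton (hp : p ≠ 0)
    (hφ : ∀ a b, φ (a ^ p * b) = a * φ b) {f : S} (hf : φ (f ^ (p - 1)) = 1) :
    IsFrobeniusSplitRing p (S ⧸ Ideal.span {f}) := by
  set I := Ideal.span {f}
  have hφI : ∀ x ∈ I, φ (f ^ (p - 1) * x) ∈ I := by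
    intro x hx
    obtain ⟨t, rfl⟩ := Ideal.mem_span_singleton'.1 hx
    rw [mul_left_comm, ← pow_succ, Nat.sub_add_cancel (Nat.one_le_iff_ne_zero.2 hp), mul_comm,
      hφ]
    exact Ideal.mul_mem_right _ _ (Ideal.mem_span_singleton_self f)
  let σ : S ⧸ I →+ S ⧸ I := QuotientAddGroup.lift I.toAddSubgroup
    ((Ideal.Quotient.mk I).toAddMonoidHom.comp (φ.comp (AddMonoidHom.mulLeft (f ^ (p - 1)))))
    fun x hx => Ideal.Quotient.eq_zero_iff_mem.2 (hφI x hx)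
  refine ⟨σ, ?_, ?_⟩
  · change Ideal.Quotient.mk I (φ (f ^ (p - 1) * 1)) = 1
    rw [mul_one, hf, map_one]
  · intro a b
    obtain ⟨a, rfl⟩ := Ideal.Quotient.mk_surjective a
    obtain ⟨b, rfl⟩ := Ideal.Quotient.mk_surjective b
    change Ideal.Quotient.mk I (φ (f ^ (p - 1) * (a ^ p * b)))
      = Ideal.Quotient.mk I a * Ideal.Quotient.mk I (φ (f ^ (p - 1) * b))
    rw [mul_left_comm, hφ, map_mul]

end FrobeniusSemilinear

namespace MvPolynomial

variable {σ R : Type*} [CommSemiring R] (p : ℕ) [ExpChar R p] [PerfectRing R p]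

open Classical in
/-- `xᵐ c ↦ x^(m / p) c^(1/p)` if `m ≡ u mod p`, and `0` otherwise. -/
noncomputable def frobeniusCoord (u : σ →₀ ℕ) : MvPolynomial σ R →+ MvPolynomial σ R :=
  (Finsupp.liftAddHom fun m =>
    if m.mapRange (· % p) (Nat.zero_mod p) = u then
      (monomial (m.mapRange (· / p) (Nat.zero_div p))).toAddMonoidHom.comp
        ((frobeniusEquiv R p).symm : R →+* R).toAddMonoidHom
    else 0).comp AddMonoidAlgebra.coeffAddEquiv.toAddMonoidHom

variable {p}

theorem frobeniusCoord_monomial_of_mod_eq {u m : σ →₀ ℕ}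
    (hm : m.mapRange (· % p) (Nat.zero_mod p) = u) (c : R) :
    frobeniusCoord p u (monomial m c)
      = monomial (m.mapRange (· / p) (Nat.zero_div p)) ((frobeniusEquiv R p).symm c) := by
  simp [frobeniusCoord, hm, monomial]

theorem frobeniusCoord_monomial_of_mod_ne {u m : σ →₀ ℕ}
    (hm : m.mapRange (· % p) (Nat.zero_mod p) ≠ u) (c : R) :
    frobeniusCoord p u (monomial m c) = 0 := by
  simp [frobeniusCoord, hm, monomial]

theorem frobeniusCoord_pow_mul (u : σ →₀ ℕ) (a b : MvPolynomial σ R) :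
    frobeniusCoord p u (a ^ p * b) = a * frobeniusCoord p u b := by
  have hp := expChar_pos R p
  induction b using MvPolynomial.induction_on' with
  | add b b' hb hb' => rw [mul_add, map_add, hb, hb', map_add, mul_add]
  | monomial m d =>
    induction a using MvPolynomial.induction_on' with
    | add a a' ha ha' => rw [add_pow_expChar, add_mul, map_add, ha, ha', add_mul]
    | monomial n c =>
      have hmod : (p • n + m).mapRange (· % p) (Nat.zero_mod p)
          = m.mapRange (· % p) (Nat.zero_mod p) := by
        ext i; simp
      rw [monomial_pow, monomial_mul]
      by_cases hm : m.mapRange (· % p) (Nat.zero_mod p) = u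
      · have hdiv : (p • n + m).mapRange (· / p) (Nat.zero_div p)
            = n + m.mapRange (· / p) (Nat.zero_div p) := by
          ext i; simp [Nat.mul_add_div hp]
        rw [frobeniusCoord_monomial_of_mod_eq (hmod.trans hm),
          frobeniusCoord_monomial_of_mod_eq hm, monomial_mul, hdiv, map_mul,
          frobeniusEquiv_symm_pow]
      · rw [frobeniusCoord_monomial_of_mod_ne (hmod ▸ hm), frobeniusCoord_monomial_of_mod_ne hm,
          mul_zero]

theorem frobeniusCoord_E84_eq_one [ExpChar R 2] [PerfectRing R 2] :
    frobeniusCoord 2 (Finsupp.single 1 1 + Finsupp.single 2 1 + Finsupp.single 3 1)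
      (X 3 ^ 2 + X 2 ^ 3 + X 0 * X 1 ^ 5 + X 1 * X 2 * X 3 : MvPolynomial (Fin 4) R) = 1 := by
  simp only [X, monomial_pow, monomial_mul, one_pow, mul_one, map_add]
  have mod_ne {m u : Fin 4 →₀ ℕ} (i : Fin 4) (hi : m i % 2 ≠ u i) :
      m.mapRange (· % 2) (Nat.zero_mod 2) ≠ u :=
    fun h => hi (by simpa using DFunLike.congr_fun h i)
  rw [frobeniusCoord_monomial_of_mod_ne (mod_ne 3 (by simp)),
    frobeniusCoord_monomial_of_mod_ne (mod_ne 1 (by simp)),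
    frobeniusCoord_monomial_of_mod_ne (mod_ne 0 (by simp)),
    frobeniusCoord_monomial_of_mod_eq (by ext i; fin_cases i <;> simp)]
  have : ((Finsupp.single 1 1 + Finsupp.single 2 1 + Finsupp.single 3 1 : Fin 4 →₀ ℕ).mapRange
      (· / 2) (Nat.zero_div 2)) = 0 := by
    ext i; fin_cases i <;> simp
  simp [this]

end MvPolynomial

/-- Let `k` be algebraically closed of characteristic 2 and
`f = w² + z³ + x·y⁵ + y·z·w ∈ k[x,y,z,w]`.  Then `f ∉ (x², y², z², w²)`, so by Fedder's
criterion the degree-one Du Val del Pezzo surface `{w² + z³ + x·y⁵ + y·z·w = 0}` in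
`ℙ(1,1,2,3)` (of type `E₈⁴` in characteristic 2) is Frobenius split. -/
theorem fedder_E8_4_char2 (k : Type*) [Field k] [IsAlgClosed k] [CharP k 2] :
    (X 3 ^ 2 + X 2 ^ 3 + X 0 * X 1 ^ 5 + X 1 * X 2 * X 3 : MvPolynomial (Fin 4) k) ∉
      Ideal.span {(X 0 : MvPolynomial (Fin 4) k) ^ 2, X 1 ^ 2, X 2 ^ 2, X 3 ^ 2} ∧
    IsFrobeniusSplitRing 2
      (MvPolynomial (Fin 4) k ⧸
        Ideal.span
          {(X 3 ^ 2 + X 2 ^ 3 + X 0 * X 1 ^ 5 + X 1 * X 2 * X 3 :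
              MvPolynomial (Fin 4) k)}) := by
  have hφ := frobeniusCoord_pow_mul (σ := Fin 4) (R := k) (p := 2)
    (Finsupp.single 1 1 + Finsupp.single 2 1 + Finsupp.single 3 1)
  have hf := frobeniusCoord_E84_eq_one (R := k)
  refine ⟨fun hmem => ?_,
    isFrobeniusSplitRing_quotient_span_singleton two_ne_zero hφ (by simpa using hf)⟩
  have h_one : (1 : MvPolynomial (Fin 4) k) ∈ Ideal.span {X 0, X 1, X 2, X 3} :=
    hf ▸ map_mem_span_of_mem_span_image_pow hφ (by simpa [Set.image_insert_eq] using hmem)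
  have h_le : Ideal.span {X 0, X 1, X 2, X 3} ≤
      RingHom.ker (constantCoeff : MvPolynomial (Fin 4) k →+* k) :=
    Ideal.span_le.2 (by simp [Set.insert_subset_iff])
  simpa using h_le h_one
end

section
/- Let k be an algebraically closed field of characteristic 2 and let f = w^2 + z^3 + x*y^5 ∈ k[x,y,z,w]. Then f ∈ (x^2, y^2, z^2, w^2), so by Fedder's criterion the degree-one Du Val del Pezzo surface {w^2 + z^3 + x y^5 = 0} in P(1,1,2,3) (of type E_8^0 in characteristic 2) is not Frobenius split. -/
open MvPolynomial

private theorem fedder_aux {R S : Type*} [CommRing R] [CommRing S] (σ : R →+ R)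
    (h1 : σ 1 = 1) (h2 : ∀ a b : R, σ (a ^ 2 * b) = a * σ b) (ψ : R →+* S)
    (a c d0 d1 : R) (hf : a ^ 2 + c ^ 3 + d0 * d1 ^ 5 = 0)
    (hc : ψ c = 0) (hd1 : ψ d1 = 0) : ψ a = 0 := by
  have ha2 : a ^ 2 = -(c ^ 3 + d0 * d1 ^ 5) := by linear_combination hf
  have e1 : σ (a ^ 2) = a := by
    have := h2 a 1
    rwa [mul_one, h1, mul_one] at this
  have e2 : σ (c ^ 3 + d0 * d1 ^ 5) = c * σ c + d1 ^ 2 * σ (d0 * d1) := by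
    rw [map_add, show c ^ 3 = c ^ 2 * c from by ring, h2,
      show d0 * d1 ^ 5 = (d1 ^ 2) ^ 2 * (d0 * d1) from by ring, h2]
  have key : a = -(c * σ c + d1 ^ 2 * σ (d0 * d1)) := by
    rw [← e1, ha2, map_neg, e2]
  rw [key, map_neg, map_add, map_mul, map_mul, map_pow, hc, hd1]
  ring

set_option maxHeartbeats 1000000 in
set_option synthInstance.maxHeartbeats 400000 in
/-- Let `k` be algebraically closed of characteristic 2 and
`f = w² + z³ + x·y⁵ ∈ k[x,y,z,w]`.  Then `f ∈ (x², y², z², w²)`, so by Fedder's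
criterion the degree-one Du Val del Pezzo surface `{w² + z³ + x·y⁵ = 0}` in
`ℙ(1,1,2,3)` (of type `E₈⁰` in characteristic 2) is not Frobenius split. -/
theorem fedder_E8_0_char2 (k : Type*) [Field k] [IsAlgClosed k] [CharP k 2] :
    (X 3 ^ 2 + X 2 ^ 3 + X 0 * X 1 ^ 5 : MvPolynomial (Fin 4) k) ∈
      Ideal.span {(X 0 : MvPolynomial (Fin 4) k) ^ 2, X 1 ^ 2, X 2 ^ 2, X 3 ^ 2} ∧
    ¬ IsFrobeniusSplitRing 2
        (MvPolynomial (Fin 4) k ⧸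
          Ideal.span {(X 3 ^ 2 + X 2 ^ 3 + X 0 * X 1 ^ 5 : MvPolynomial (Fin 4) k)}) := by
  constructor
  · refine Ideal.add_mem _ (Ideal.add_mem _ ?_ ?_) ?_
    · exact Ideal.subset_span
        (Set.mem_insert_of_mem _ (Set.mem_insert_of_mem _ (Set.mem_insert_of_mem _ rfl)))
    · have h : (X 2 : MvPolynomial (Fin 4) k) ^ 3 = X 2 ^ 2 * X 2 := by ring
      rw [h]
      exact Ideal.mul_mem_right _ _ (Ideal.subset_span
        (Set.mem_insert_of_mem _ (Set.mem_insert_of_mem _ (Set.mem_insert _ _))))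
    · have h : (X 0 : MvPolynomial (Fin 4) k) * X 1 ^ 5 = X 1 ^ 2 * (X 0 * X 1 ^ 3) := by
        ring
      rw [h]
      exact Ideal.mul_mem_right _ _ (Ideal.subset_span
        (Set.mem_insert_of_mem _ (Set.mem_insert _ _)))
  · rintro ⟨σ, h1, h2⟩
    -- evaluation at x = y = z = 0, w = ε in the dual numbers kills f
    have hφf : (aeval (![0, 0, 0, DualNumber.eps] : Fin 4 → DualNumber k))
        (X 3 ^ 2 + X 2 ^ 3 + X 0 * X 1 ^ 5 : MvPolynomial (Fin 4) k) = 0 := by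
      simp [sq, DualNumber.eps_mul_eps]
    have hlift : ∀ a ∈ Ideal.span
        {(X 3 ^ 2 + X 2 ^ 3 + X 0 * X 1 ^ 5 : MvPolynomial (Fin 4) k)},
        (aeval (![0, 0, 0, DualNumber.eps] : Fin 4 → DualNumber k)).toRingHom a = 0 := by
      intro a ha
      rw [Ideal.mem_span_singleton] at ha
      obtain ⟨c, rfl⟩ := ha
      rw [map_mul]
      simp only [AlgHom.toRingHom_eq_coe, RingHom.coe_coe] at hφf ⊢
      rw [hφf, zero_mul]
    -- the induced map on the quotient
    set ψ := Ideal.Quotient.lift _ _ hlift with hψdef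
    set q := Ideal.Quotient.mk (Ideal.span
      {(X 3 ^ 2 + X 2 ^ 3 + X 0 * X 1 ^ 5 : MvPolynomial (Fin 4) k)}) with hqdef
    have hf0 : (q (X 3)) ^ 2 + (q (X 2)) ^ 3 + q (X 0) * (q (X 1)) ^ 5 = 0 := by
      rw [← RingHom.map_pow, ← RingHom.map_pow, ← RingHom.map_pow, ← RingHom.map_mul,
        ← RingHom.map_add, ← RingHom.map_add]
      exact Ideal.Quotient.eq_zero_iff_mem.mpr (Ideal.mem_span_singleton_self _)
    have hψc : ψ (q (X 2)) = 0 := by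
      rw [hψdef, hqdef, Ideal.Quotient.lift_mk]
      simp
    have hψd1 : ψ (q (X 1)) = 0 := by
      rw [hψdef, hqdef, Ideal.Quotient.lift_mk]
      simp
    have hψa : ψ (q (X 3)) = DualNumber.eps := by
      rw [hψdef, hqdef, Ideal.Quotient.lift_mk]
      simp
    have := fedder_aux σ h1 h2 ψ (q (X 3)) (q (X 2)) (q (X 0)) (q (X 1)) hf0 hψc hψd1
    rw [hψa] at this
    have h10 : (1 : k) = 0 := by
      simpa [DualNumber.snd_eps] using congrArg TrivSqZeroExt.snd this
    exact one_ne_zero h10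
end
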